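/- For each x > 0 there is a unique t_x < 1 with f(t_x) = x, where f(t) = (1/√t)·log((1+√t)/(1-√t)) for 0<t<1, f(0)=2, f(t) = (2/√|t|)·arctan(√|t|) for t<0. Moreover, the supremum sup_{t ≤ 1} [ (t/2)·x + ∫₁^∞ log(1 - t/y²) dy ] is attained at t = t_x. -/

import Mathlib

open Real Set MeasureTheory

/-- The function `f` from the paper, defined piecewise on `(-∞, 1)`. -/
noncomputable def kingmanF (t : ℝ) : ℝ :=
  if 0 < t then (1 / Real.sqrt t) * Real.log ((1 + Real.sqrt t) / (1 - Real.sqrt t))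
  else if t = 0 then 2
  else (2 / Real.sqrt |t|) * Real.arctan (Real.sqrt |t|)

/-! The identity `∫₁^∞ (y² - t)⁻¹ dy = f(t) / 2` for `t < 1`, checked with an explicit
primitive in each of the three regimes of `f`, shows that `f` is continuous and strictly
increasing on `(-∞, 1)`; since `f(-(π/x)²) < x < f((1 - e^{-x})²)`, the value `x` is attained
exactly once. For the supremum, concavity of `t ↦ log (1 - t/y²)` gives
`log (1 - s/y²) ≤ log (1 - t/y²) + (t - s) / (y² - t)`; integrating over `y > 1` at `t = t_x`
turns the last term into `(t_x - s) · x / 2`. -/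

open Filter Topology

lemma sq_sub_pos_of_one_lt {t y : ℝ} (ht : t ≤ 1) (hy : 1 < y) : 0 < y ^ 2 - t := by
  nlinarith

lemma kingmanF_sq {u : ℝ} (hu : 0 < u) :
    kingmanF (u ^ 2) = u⁻¹ * log ((1 + u) / (1 - u)) := by
  rw [kingmanF, if_pos (by positivity), sqrt_sq hu.le, one_div]

lemma kingmanF_neg_sq {c : ℝ} (hc : 0 < c) : kingmanF (-c ^ 2) = 2 / c * arctan c := by
  have hneg : -c ^ 2 < 0 := by nlinarith
  rw [kingmanF, if_neg hneg.not_gt, if_neg hneg.ne, abs_neg, abs_of_pos (by positivity),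
    sqrt_sq hc.le]

lemma hasDerivAt_inv_mul_arctan_div {c : ℝ} (hc : c ≠ 0) (y : ℝ) :
    HasDerivAt (fun y => c⁻¹ * arctan (y / c)) ((y ^ 2 + c ^ 2)⁻¹) y := by
  refine ((((hasDerivAt_id' y).div_const c).arctan).const_mul c⁻¹).congr_deriv ?_
  field_simp
  ring

lemma hasDerivAt_inv_two_mul_log_sub_log {c y : ℝ} (hc : c ≠ 0) (h₁ : y - c ≠ 0)
    (h₂ : y + c ≠ 0) :
    HasDerivAt (fun y => (2 * c)⁻¹ * (log (y - c) - log (y + c))) ((y ^ 2 - c ^ 2)⁻¹) y := by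
  refine (((((hasDerivAt_id' y).sub_const c).log h₁).sub
    (((hasDerivAt_id' y).add_const c).log h₂)).const_mul (2 * c)⁻¹).congr_deriv ?_
  rw [show y ^ 2 - c ^ 2 = (y - c) * (y + c) by ring]
  field_simp
  ring

lemma integrableOn_and_integral_inv_sq_sub_of_hasDerivAt {t L : ℝ} {F : ℝ → ℝ}
    (ht : t ≤ 1) (hF : ∀ y ∈ Ici 1, HasDerivAt F ((y ^ 2 - t)⁻¹) y) (hL : Tendsto F atTop (𝓝 L)) :
    IntegrableOn (fun y => (y ^ 2 - t)⁻¹) (Ioi 1) ∧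
      ∫ y in Ioi 1, (y ^ 2 - t)⁻¹ = L - F 1 := by
  have hnonneg : ∀ y ∈ Ioi (1 : ℝ), 0 ≤ (y ^ 2 - t)⁻¹ := fun y hy =>
    (inv_pos.2 (sq_sub_pos_of_one_lt ht hy)).le
  exact ⟨integrableOn_Ioi_deriv_of_nonneg' hF hnonneg hL,
    integral_Ioi_of_hasDerivAt_of_nonneg' hF hnonneg hL⟩

lemma integrableOn_and_integral_inv_sq_sub_of_neg {t : ℝ} (ht : t < 0) :
    IntegrableOn (fun y => (y ^ 2 - t)⁻¹) (Ioi 1) ∧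
      ∫ y in Ioi 1, (y ^ 2 - t)⁻¹ = kingmanF t / 2 := by
  obtain ⟨c, hc, rfl⟩ : ∃ c, 0 < c ∧ t = -c ^ 2 :=
    ⟨√(-t), sqrt_pos.2 (neg_pos.2 ht), by rw [sq_sqrt (neg_nonneg.2 ht.le), neg_neg]⟩
  have hF : ∀ y ∈ Ici (1 : ℝ),
      HasDerivAt (fun y => c⁻¹ * arctan (y / c)) ((y ^ 2 - -c ^ 2)⁻¹) y := fun y _ => by
    simpa only [sub_neg_eq_add] using hasDerivAt_inv_mul_arctan_div hc.ne' y
  have hL : Tendsto (fun y => c⁻¹ * arctan (y / c)) atTop (𝓝 (c⁻¹ * (π / 2))) :=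
    ((tendsto_arctan_atTop.mono_right nhdsWithin_le_nhds).comp
      (tendsto_id.atTop_div_const hc)).const_mul _
  obtain ⟨hint, h⟩ := integrableOn_and_integral_inv_sq_sub_of_hasDerivAt (by linarith) hF hL
  refine ⟨hint, ?_⟩
  rw [h, kingmanF_neg_sq hc, one_div, arctan_inv_of_pos hc]
  ring

lemma integrableOn_and_integral_inv_sq_sub_zero :
    IntegrableOn (fun y : ℝ => (y ^ 2 - 0)⁻¹) (Ioi 1) ∧
      ∫ y in Ioi 1, (y ^ 2 - 0)⁻¹ = kingmanF 0 / 2 := by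
  have hF : ∀ y ∈ Ici (1 : ℝ), HasDerivAt (fun y => -y⁻¹) ((y ^ 2 - 0)⁻¹) y := fun y hy => by
    simpa using (hasDerivAt_inv (x := y) (zero_lt_one.trans_le hy).ne').fun_neg
  have hL : Tendsto (fun y : ℝ => -y⁻¹) atTop (𝓝 (-0)) := tendsto_inv_atTop_zero.neg
  obtain ⟨hint, h⟩ := integrableOn_and_integral_inv_sq_sub_of_hasDerivAt zero_le_one hF hL
  refine ⟨hint, ?_⟩
  rw [h]
  norm_num [kingmanF]

lemma integrableOn_and_integral_inv_sq_sub_of_pos {t : ℝ} (h₀ : 0 < t) (h₁ : t < 1) :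
    IntegrableOn (fun y => (y ^ 2 - t)⁻¹) (Ioi 1) ∧
      ∫ y in Ioi 1, (y ^ 2 - t)⁻¹ = kingmanF t / 2 := by
  obtain ⟨c, hc, rfl⟩ : ∃ c, 0 < c ∧ t = c ^ 2 := ⟨√t, sqrt_pos.2 h₀, (sq_sqrt h₀.le).symm⟩
  have hc₁ : c < 1 := by nlinarith
  set F := fun y => (2 * c)⁻¹ * (log (y - c) - log (y + c))
  have hF : ∀ y ∈ Ici (1 : ℝ), HasDerivAt F ((y ^ 2 - c ^ 2)⁻¹) y := fun y hy =>
    hasDerivAt_inv_two_mul_log_sub_log hc.ne' (by linarith [hy.out]) (by linarith [hy.out])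
  have hL : Tendsto F atTop (𝓝 ((2 * c)⁻¹ * log (1 - 0))) := by
    have hquot : Tendsto (fun y => 1 - 2 * c / (y + c)) atTop (𝓝 (1 - 0)) :=
      tendsto_const_nhds.sub
        (tendsto_const_nhds.div_atTop (tendsto_atTop_add_const_right _ c tendsto_id))
    refine ((hquot.log (by norm_num)).const_mul _).congr' ?_
    filter_upwards [eventually_gt_atTop c] with y hy
    have hyc : 0 < y + c := by linarith
    have : 1 - 2 * c / (y + c) = (y - c) / (y + c) := by field_simp; ring
    simp only [F, this, log_div (sub_pos.2 hy).ne' hyc.ne']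
  obtain ⟨hint, h⟩ := integrableOn_and_integral_inv_sq_sub_of_hasDerivAt (by linarith) hF hL
  refine ⟨hint, ?_⟩
  rw [h, kingmanF_sq hc, log_div (by linarith) (by linarith)]
  simp only [F, sub_zero, log_one]
  ring

lemma integrableOn_and_integral_inv_sq_sub {t : ℝ} (ht : t < 1) :
    IntegrableOn (fun y => (y ^ 2 - t)⁻¹) (Ioi 1) ∧
      ∫ y in Ioi 1, (y ^ 2 - t)⁻¹ = kingmanF t / 2 := by
  rcases lt_trichotomy t 0 with h | rfl | h
  · exact integrableOn_and_integral_inv_sq_sub_of_neg h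
  · exact integrableOn_and_integral_inv_sq_sub_zero
  · exact integrableOn_and_integral_inv_sq_sub_of_pos h ht

lemma integrableOn_inv_sq_sub {t : ℝ} (ht : t < 1) :
    IntegrableOn (fun y => (y ^ 2 - t)⁻¹) (Ioi 1) :=
  (integrableOn_and_integral_inv_sq_sub ht).1

lemma integral_inv_sq_sub {t : ℝ} (ht : t < 1) :
    ∫ y in Ioi 1, (y ^ 2 - t)⁻¹ = kingmanF t / 2 :=
  (integrableOn_and_integral_inv_sq_sub ht).2

lemma continuousOn_integral_inv_sq_sub :
    ContinuousOn (fun t : ℝ => ∫ y in Ioi (1 : ℝ), (y ^ 2 - t)⁻¹) (Iio 1) := by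
  intro t₀ ht₀
  obtain ⟨m, ht₀m, hm⟩ := exists_between ht₀.out
  have hnhds : ∀ᶠ t in 𝓝 t₀, t < m := Iio_mem_nhds ht₀m
  refine (continuousAt_of_dominated (bound := fun y => (y ^ 2 - m)⁻¹) ?_ ?_
    (integrableOn_inv_sq_sub hm) ?_).continuousWithinAt
  · filter_upwards [hnhds] with t ht
    exact (integrableOn_inv_sq_sub (ht.trans hm)).aestronglyMeasurable
  · filter_upwards [hnhds] with t ht
    refine (ae_restrict_iff' measurableSet_Ioi).2 (ae_of_all _ fun y hy => ?_)
    have hm' := sq_sub_pos_of_one_lt hm.le hy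
    rw [norm_inv, norm_of_nonneg (by linarith)]
    exact inv_anti₀ hm' (by linarith)
  · refine (ae_restrict_iff' measurableSet_Ioi).2 (ae_of_all _ fun y hy => ?_)
    exact (continuousAt_const.sub continuousAt_id).inv₀ (sq_sub_pos_of_one_lt ht₀.out.le hy).ne'

lemma continuousOn_kingmanF : ContinuousOn kingmanF (Iio 1) :=
  ((continuousOn_const (c := (2 : ℝ))).mul continuousOn_integral_inv_sq_sub).congr fun t ht => by
    simp only [Pi.mul_apply, integral_inv_sq_sub ht.out]
    ring

lemma setIntegral_pos_of_pos_on {α : Type*} [MeasurableSpace α] {μ : Measure α} {s : Set α}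
    {f : α → ℝ} (hs : MeasurableSet s) (hμs : μ s ≠ 0) (hf : IntegrableOn f s μ)
    (hpos : ∀ x ∈ s, 0 < f x) : 0 < ∫ x in s, f x ∂μ := by
  rw [setIntegral_pos_iff_support_of_nonneg_ae
    ((ae_restrict_iff' hs).2 (ae_of_all _ fun x hx => (hpos x hx).le)) hf,
    inter_eq_right.2 fun x hx => Function.mem_support.2 (hpos x hx).ne']
  exact pos_iff_ne_zero.2 hμs

lemma kingmanF_strictMonoOn : StrictMonoOn kingmanF (Iio 1) := by
  intro s hs t ht hst
  have hpos : 0 < ∫ y in Ioi 1, ((y ^ 2 - t)⁻¹ - (y ^ 2 - s)⁻¹) := by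
    refine setIntegral_pos_of_pos_on measurableSet_Ioi (by simp)
      ((integrableOn_inv_sq_sub ht).sub (integrableOn_inv_sq_sub hs)) fun y hy => ?_
    exact sub_pos.2 (inv_strictAnti₀ (sq_sub_pos_of_one_lt ht.out.le hy) (by linarith))
  rw [integral_sub (integrableOn_inv_sq_sub ht) (integrableOn_inv_sq_sub hs),
    integral_inv_sq_sub ht, integral_inv_sq_sub hs] at hpos
  linarith

lemma kingmanF_neg_sq_div_lt {x : ℝ} (hx : 0 < x) : kingmanF (-(π / x) ^ 2) < x := by
  have hc : 0 < π / x := div_pos pi_pos hx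
  calc kingmanF (-(π / x) ^ 2) = 2 / (π / x) * arctan (π / x) := kingmanF_neg_sq hc
    _ < 2 / (π / x) * (π / 2) := by gcongr; exact arctan_lt_pi_div_two _
    _ = x := by field_simp

lemma lt_kingmanF_sq_one_sub_exp {x : ℝ} (hx : 0 < x) : x < kingmanF ((1 - exp (-x)) ^ 2) := by
  set u := 1 - exp (-x)
  have hu₀ : 0 < u := sub_pos.2 (exp_lt_one_iff.2 (neg_lt_zero.2 hx))
  have hu₁ : 0 < 1 - u := by simp [u, exp_pos]
  have hlog : log ((1 + u) / (1 - u)) = log (1 + u) + x := by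
    rw [log_div (by linarith) hu₁.ne', show 1 - u = exp (-x) by ring, log_exp]; ring
  have hlog₀ : 0 < log (1 + u) := log_pos (by linarith)
  have hinv : 1 < u⁻¹ := (one_lt_inv₀ hu₀).2 (by linarith)
  rw [kingmanF_sq hu₀, hlog]
  nlinarith

lemma exists_kingmanF_eq {x : ℝ} (hx : 0 < x) : ∃ t < 1, kingmanF t = x := by
  set a := -(π / x) ^ 2
  set b := (1 - exp (-x)) ^ 2
  have hb : b < 1 := by
    have h₀ : 0 < exp (-x) := exp_pos _
    have h₁ : exp (-x) < 1 := exp_lt_one_iff.2 (neg_lt_zero.2 hx)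
    nlinarith
  have ha : a ≤ b := (neg_nonpos.2 (sq_nonneg _)).trans (sq_nonneg _)
  obtain ⟨t, ht, hft⟩ := intermediate_value_Icc ha
    (continuousOn_kingmanF.mono fun t ht => ht.2.trans_lt hb)
    ⟨(kingmanF_neg_sq_div_lt hx).le, (lt_kingmanF_sq_one_sub_exp hx).le⟩
  exact ⟨t, ht.2.trans_lt hb, hft⟩

lemma log_one_sub_one_div_sq {y : ℝ} (hy : 1 < y) :
    log (1 - 1 / y ^ 2) = log (y - 1) + log (y + 1) - 2 * log y := by
  have h : 1 - 1 / y ^ 2 = (y - 1) * (y + 1) / y ^ 2 := by field_simp; ring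
  rw [h, log_div (by nlinarith) (by positivity), log_mul (by linarith) (by linarith), log_pow]
  push_cast
  ring

lemma hasDerivAt_primitive_log_one_sub_one_div_sq {y : ℝ} (hy : 1 < y) :
    HasDerivAt (fun y => (y - 1) * log (y - 1) + (y + 1) * log (y + 1) - 2 * (y * log y))
      (log (1 - 1 / y ^ 2)) y := by
  have h₁ := (hasDerivAt_mul_log (sub_pos.2 hy).ne').comp y ((hasDerivAt_id' y).sub_const 1)
  have h₂ := (hasDerivAt_mul_log (by linarith : y + 1 ≠ 0)).comp y
    ((hasDerivAt_id' y).add_const 1)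
  have h₃ := (hasDerivAt_mul_log (by linarith : y ≠ 0)).const_mul 2
  refine ((h₁.add h₂).sub h₃).congr_deriv ?_
  rw [log_one_sub_one_div_sq hy]
  ring

lemma tendsto_primitive_log_one_sub_one_div_sq :
    Tendsto (fun y => (y - 1) * log (y - 1) + (y + 1) * log (y + 1) - 2 * (y * log y))
      atTop (𝓝 0) := by
  have h₁ : Tendsto (fun y : ℝ => y * log (1 + -(1 / y ^ 2))) atTop (𝓝 0) := by
    have h : Tendsto (fun y : ℝ => -y⁻¹) atTop (𝓝 0) := by
      simpa using (tendsto_inv_atTop_zero : Tendsto (fun y : ℝ => y⁻¹) atTop (𝓝 0)).neg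
    refine tendsto_mul_log_one_add_of_tendsto (h.congr' ?_)
    filter_upwards [eventually_ne_atTop 0] with y hy
    field_simp
  have h₂ : Tendsto (fun y : ℝ => log (1 + 2 / (y - 1))) atTop (𝓝 0) := by
    have h : Tendsto (fun y : ℝ => y - 1) atTop atTop :=
      (tendsto_atTop_add_const_right atTop (-1 : ℝ) tendsto_id).congr fun y =>
        (sub_eq_add_neg y 1).symm
    simpa using ((tendsto_const_nhds (x := (1 : ℝ)).add
      ((tendsto_const_nhds (x := (2 : ℝ))).div_atTop h)).log (by norm_num))
  have h := h₁.add h₂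
  rw [add_zero] at h
  refine h.congr' ?_
  filter_upwards [eventually_gt_atTop 1] with y hy
  have h₃ : 1 + 2 / (y - 1) = (y + 1) / (y - 1) := by field_simp; ring
  rw [← sub_eq_add_neg, log_one_sub_one_div_sq hy, h₃,
    log_div (by linarith) (sub_pos.2 hy).ne']
  ring

lemma integrableOn_log_one_sub_one_div_sq :
    IntegrableOn (fun y => log (1 - 1 / y ^ 2)) (Ioi 1) := by
  refine integrableOn_Ioi_deriv_of_nonpos (Continuous.continuousWithinAt (by fun_prop))
    (fun y hy => hasDerivAt_primitive_log_one_sub_one_div_sq hy) (fun y hy => ?_)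
    tendsto_primitive_log_one_sub_one_div_sq
  have hy₂ : 1 < y ^ 2 := sub_pos.1 (sq_sub_pos_of_one_lt le_rfl hy)
  exact log_nonpos (by rw [sub_nonneg, div_le_one (by positivity)]; linarith)
    (by linarith [one_div_pos.2 (zero_lt_one.trans hy₂)])

lemma abs_log_one_sub_div_le {s u : ℝ} (hs : s ≤ 1) (hu : 1 < u) :
    |log (1 - s / u)| ≤ -log (1 - 1 / u) + |s| * u⁻¹ := by
  have hu₀ : 0 < u := by linarith
  have h₁ : 0 < 1 - 1 / u := by rw [sub_pos, div_lt_one hu₀]; exact hu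
  have h₁' : log (1 - 1 / u) ≤ 0 := log_nonpos h₁.le (by linarith [one_div_pos.2 hu₀])
  rcases le_or_gt s 0 with hs₀ | hs₀
  · have h₂ : 1 ≤ 1 - s / u := by linarith [div_nonpos_of_nonpos_of_nonneg hs₀ hu₀.le]
    rw [abs_of_nonneg (log_nonneg h₂), abs_of_nonpos hs₀]
    have := log_le_sub_one_of_pos (zero_lt_one.trans_le h₂)
    have : -s * u⁻¹ = 1 - s / u - 1 := by ring
    linarith
  · have h₂ : 1 - 1 / u ≤ 1 - s / u := by gcongr
    have h₃ : log (1 - s / u) ≤ 0 :=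
      log_nonpos (h₁.le.trans h₂) (by linarith [div_pos hs₀ hu₀])
    rw [abs_of_nonpos h₃]
    linarith [log_le_log h₁ h₂, mul_nonneg (abs_nonneg s) (inv_nonneg.2 hu₀.le)]

lemma integrableOn_log_one_sub_div_sq {s : ℝ} (hs : s ≤ 1) :
    IntegrableOn (fun y => log (1 - s / y ^ 2)) (Ioi 1) := by
  have hbound :
      IntegrableOn (fun y : ℝ => -log (1 - 1 / y ^ 2) + |s| * (y ^ 2 - 0)⁻¹) (Ioi 1) :=
    integrableOn_log_one_sub_one_div_sq.neg.add
      ((integrableOn_inv_sq_sub zero_lt_one).const_mul _)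
  have hmeas : Measurable fun y : ℝ => log (1 - s / y ^ 2) := by fun_prop
  refine hbound.mono' hmeas.aestronglyMeasurable
    ((ae_restrict_iff' measurableSet_Ioi).2 (ae_of_all _ fun y hy => ?_))
  rw [sub_zero, norm_eq_abs]
  exact abs_log_one_sub_div_le hs (sub_pos.1 (sq_sub_pos_of_one_lt le_rfl hy))

lemma log_one_sub_div_le_add_mul_inv {s t u : ℝ} (hu : 0 < u) (hs : s < u) (ht : t < u) :
    log (1 - s / u) ≤ log (1 - t / u) + (t - s) * (u - t)⁻¹ := by
  have hs' : 0 < 1 - s / u := by rw [sub_pos, div_lt_one hu]; exact hs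
  have ht' : 0 < 1 - t / u := by rw [sub_pos, div_lt_one hu]; exact ht
  have h := log_le_sub_one_of_pos (div_pos hs' ht')
  rw [log_div hs'.ne' ht'.ne'] at h
  have : (1 - s / u) / (1 - t / u) - 1 = (t - s) * (u - t)⁻¹ := by
    field_simp [(sub_pos.2 ht).ne']
    ring
  linarith

lemma integral_log_one_sub_div_sq_le {s t : ℝ} (hs : s ≤ 1) (ht : t < 1) :
    ∫ y in Ioi 1, log (1 - s / y ^ 2) ≤
      (∫ y in Ioi 1, log (1 - t / y ^ 2)) + (t - s) * (kingmanF t / 2) := by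
  have hlog := integrableOn_log_one_sub_div_sq ht.le
  have hinv := (integrableOn_inv_sq_sub ht).const_mul (t - s)
  calc ∫ y in Ioi 1, log (1 - s / y ^ 2)
      ≤ ∫ y in Ioi 1, (log (1 - t / y ^ 2) + (t - s) * (y ^ 2 - t)⁻¹) :=
        setIntegral_mono_on (integrableOn_log_one_sub_div_sq hs) (hlog.add hinv)
          measurableSet_Ioi fun y hy => log_one_sub_div_le_add_mul_inv
            (sub_pos.1 (sq_sub_pos_of_one_lt zero_le_one hy))
            (sub_pos.1 (sq_sub_pos_of_one_lt hs hy)) (sub_pos.1 (sq_sub_pos_of_one_lt ht.le hy))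
    _ = _ := by rw [integral_add hlog hinv, integral_const_mul, integral_inv_sq_sub ht]

/-- For each `x > 0` there is a unique `t_x < 1` with `f(t_x) = x`, and the supremum of
`t ↦ (t/2)x + ∫₁^∞ log(1 - t/y²) dy` over `t ≤ 1` is attained at `t_x`. -/
theorem kingman_tx_exists_unique_and_sup (x : ℝ) (hx : 0 < x) :
    (∃! t : ℝ, t < 1 ∧ kingmanF t = x) ∧
    (∀ t : ℝ, t < 1 → kingmanF t = x →
      ∀ s : ℝ, s ≤ 1 →
        s / 2 * x + ∫ y in Ioi (1:ℝ), Real.log (1 - s / y ^ 2)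
          ≤ t / 2 * x + ∫ y in Ioi (1:ℝ), Real.log (1 - t / y ^ 2)) := by
  refine ⟨?_, fun t ht hft s hs => ?_⟩
  · obtain ⟨t, ht, hft⟩ := exists_kingmanF_eq hx
    exact ⟨t, ⟨ht, hft⟩, fun t' ⟨ht', hft'⟩ =>
      kingmanF_strictMonoOn.injOn ht' ht (hft'.trans hft.symm)⟩
  · have h := integral_log_one_sub_div_sq_le hs ht
    rw [hft] at h
    linarith
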